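/- Every set of 5 points in the plane ℝ² in general position contains a 4-hole; hence h(4) = 5. -/

import Mathlib

/-!
Let `E` be the set of extreme points of the convex hull of `S`. By Krein–Milman `S` lies in the
convex hull of `E`, and `S` is not collinear, so `E` has at least three points `x₁, x₂, x₃`;
call the two remaining points `u` and `e`. By pigeonhole two of the `xᵢ`, say `x` and `y`, lie
strictly on the same side of the line `eu`. Then `x, y, u, e` is a 4-hole: `x` and `y` are
extreme in `S`; `u` and `e` are not in the triangle spanned by the other three, since the line
through a point of a triangle and one of its vertices separates the two other vertices; and the
fifth point, being extreme in `S`, is not in their convex hull.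
-/

/-- Orientation determinant of three points in the plane:
`det [[1,1,1],[pₓ,qₓ,rₓ],[p_y,q_y,r_y]]`.
The triple `(p,q,r)` is positively oriented iff `det3 p q r > 0`,
and negatively oriented iff `det3 p q r < 0`. -/
noncomputable def det3 (p q r : ℝ × ℝ) : ℝ :=
  Matrix.det !![(1:ℝ), 1, 1; p.1, q.1, r.1; p.2, q.2, r.2]

/-- A set of points in the plane is in general position if no three
distinct points of it are collinear. -/
def InGenPos (S : Set (ℝ × ℝ)) : Prop :=
  ∀ p ∈ S, ∀ q ∈ S, ∀ r ∈ S, p ≠ q → p ≠ r → q ≠ r →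
    ¬ Collinear ℝ ({p, q, r} : Set (ℝ × ℝ))

/-- `P` is a `k`-gon of `S`: a `k`-element subset of `S` in convex position,
i.e. every point of `P` is an extreme point of the convex hull of `P`. -/
def IsGon (k : ℕ) (S P : Set (ℝ × ℝ)) : Prop :=
  P ⊆ S ∧ P.Finite ∧ P.ncard = k ∧
    ∀ p ∈ P, p ∈ Set.extremePoints ℝ (convexHull ℝ P)

/-- `P` is a `k`-hole of `S`: a `k`-gon of `S` whose convex hull contains
no point of `S` other than the `k` points of `P`. -/
def IsHole (k : ℕ) (S P : Set (ℝ × ℝ)) : Prop :=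
  IsGon k S P ∧ ∀ q ∈ S, q ∈ convexHull ℝ P → q ∈ P

open Set

section Convex

variable {𝕜 E : Type*} [Field 𝕜] [LinearOrder 𝕜] [IsStrictOrderedRing 𝕜]
  [AddCommGroup E] [Module 𝕜 E]

lemma exists_of_mem_convexHull_triple {x y z p : E}
    (h : p ∈ convexHull 𝕜 ({x, y, z} : Set E)) :
    ∃ a b c : 𝕜, 0 ≤ a ∧ 0 ≤ b ∧ 0 ≤ c ∧ a + b + c = 1 ∧ p = a • x + b • y + c • z := by
  rw [convexHull_insert (insert_nonempty y {z}), convexHull_pair, mem_convexJoin] at h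
  obtain ⟨_, rfl, w, ⟨s, t, hs, ht, hst, rfl⟩, a, b, ha, hb, hab, rfl⟩ := h
  refine ⟨a, b * s, b * t, ha, by positivity, by positivity, by linear_combination b * hst + hab,
    ?_⟩
  simp only [smul_add, smul_smul, add_assoc]

lemma notMem_convexHull_sdiff_of_mem_extremePoints {S : Set E} {p : E}
    (hp : p ∈ (convexHull 𝕜 S).extremePoints 𝕜) : p ∉ convexHull 𝕜 (S \ {p}) :=
  fun h ↦ ((convex_convexHull 𝕜 S).mem_extremePoints_iff_mem_sdiff_convexHull_sdiff.1 hp).2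
    (convexHull_mono (sdiff_subset_sdiff_left (subset_convexHull 𝕜 S)) h)

end Convex

lemma collinear_of_subset_convexHull {k V : Type*} [DivisionRing k] [PartialOrder k]
    [AddCommGroup V] [Module k V] {s t : Set V} (ht : Collinear k t)
    (hst : s ⊆ convexHull k t) : Collinear k s :=
  (Submodule.rank_mono ((vectorSpan_mono k (hst.trans (convexHull_subset_affineSpan t))).trans_eq
    (direction_affineSpan k t))).trans ht

lemma collinear_of_ncard_le_two {k V : Type*} [DivisionRing k] [AddCommGroup V] [Module k V]
    {s : Set V} (hs : s.Finite) (h : s.ncard ≤ 2) : Collinear k s := by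
  interval_cases hn : s.ncard
  · simp [(ncard_eq_zero hs).1 hn, collinear_empty]
  · obtain ⟨a, rfl⟩ := ncard_eq_one.1 hn
    exact collinear_singleton k a
  · obtain ⟨a, b, -, rfl⟩ := ncard_eq_two.1 hn
    exact collinear_pair k a b

lemma mul_pos_or_mul_pos_or_mul_pos_of_ne_zero {α : Type*} [Ring α] [LinearOrder α]
    [IsStrictOrderedRing α] {a b c : α} (ha : a ≠ 0) (hb : b ≠ 0) (hc : c ≠ 0) :
    0 < a * b ∨ 0 < a * c ∨ 0 < b * c := by
  rcases ha.lt_or_gt with ha | ha <;> rcases hb.lt_or_gt with hb | hb <;>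
    rcases hc.lt_or_gt with hc | hc <;> simp [mul_pos_of_neg_of_neg, *]

lemma convex_insert_setOf_lt {E : Type*} [AddCommGroup E] [Module ℝ E] (f : E →ₗ[ℝ] ℝ) (p : E) :
    Convex ℝ (insert p {y | f y < f p}) := by
  rw [convex_iff_openSegment_subset]
  rintro y₁ hy₁ y₂ hy₂ _ ⟨a, b, ha, hb, hab, rfl⟩
  by_cases hp₁₂ : y₁ = p ∧ y₂ = p
  · rw [hp₁₂.1, hp₁₂.2, Convex.combo_self hab]
    exact mem_insert p _
  have hle : ∀ y ∈ insert p {y | f y < f p}, f y ≤ f p := by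
    rintro y (rfl | hy)
    exacts [le_rfl, le_of_lt hy]
  have hlt := (not_and_or.1 hp₁₂).imp hy₁.resolve_left hy₂.resolve_left
  refine Or.inr (show f (a • y₁ + b • y₂) < f p from ?_)
  rw [map_add, map_smul, map_smul, smul_eq_mul, smul_eq_mul]
  obtain rfl : b = 1 - a := by linarith
  rcases hlt with (hlt : f y₁ < f p) | (hlt : f y₂ < f p)
  · nlinarith [mul_lt_mul_of_pos_left hlt ha, mul_le_mul_of_nonneg_left (hle y₂ hy₂) hb.le]
  · nlinarith [mul_le_mul_of_nonneg_left (hle y₁ hy₁) ha.le, mul_lt_mul_of_pos_left hlt hb]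

section Normed

variable {E : Type*} [NormedAddCommGroup E] [NormedSpace ℝ E]

lemma mem_extremePoints_convexHull_of_notMem_convexHull_sdiff {P : Set E} {p : E}
    (hP : P.Finite) (hp : p ∈ P) (h : p ∉ convexHull ℝ (P \ {p})) :
    p ∈ (convexHull ℝ P).extremePoints ℝ := by
  -- a functional `f` separating `p` from the other points is `< f p` on the rest of the hull,
  -- so removing `p` from the hull leaves a convex set
  obtain ⟨f, u, hfu, hup⟩ := geometric_hahn_banach_closed_point (convex_convexHull ℝ _)
    (hP.sdiff.isCompact_convexHull (𝕜 := ℝ)).isClosed h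
  have hPK : convexHull ℝ P ⊆ insert p {y | f y < f p} := by
    refine convexHull_min (fun y hy ↦ ?_) (convex_insert_setOf_lt (f : E →ₗ[ℝ] ℝ) p)
    rcases eq_or_ne y p with rfl | hyp
    · exact mem_insert _ _
    · exact Or.inr ((hfu y (subset_convexHull ℝ _ ⟨hy, hyp⟩)).trans hup)
  have hsdiff : convexHull ℝ P \ {p} = convexHull ℝ P ∩ {y | f y < f p} := by
    ext y
    constructor
    · rintro ⟨hy, hyp⟩
      exact ⟨hy, (hPK hy).resolve_left hyp⟩
    · rintro ⟨hy, hfy⟩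
      exact ⟨hy, fun hyp ↦ hfy.ne (congrArg f hyp)⟩
  rw [(convex_convexHull ℝ P).mem_extremePoints_iff_convex_sdiff, hsdiff]
  exact ⟨subset_convexHull ℝ P hp,
    (convex_convexHull ℝ P).inter (convex_halfSpace_lt f.isLinear _)⟩

lemma Set.Finite.subset_convexHull_extremePoints {S : Set E} (hS : S.Finite) :
    S ⊆ convexHull ℝ ((convexHull ℝ S).extremePoints ℝ) := by
  have hext : ((convexHull ℝ S).extremePoints ℝ).Finite :=
    hS.subset extremePoints_convexHull_subset
  rw [← (hext.isCompact_convexHull (𝕜 := ℝ)).isClosed.closure_eq,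
    closure_convexHull_extremePoints (hS.isCompact_convexHull (𝕜 := ℝ)) (convex_convexHull ℝ S)]
  exact subset_convexHull ℝ S

end Normed

lemma det3_eq (p q r : ℝ × ℝ) :
    det3 p q r = (q.1 - p.1) * (r.2 - p.2) - (q.2 - p.2) * (r.1 - p.1) := by
  simp [det3, Matrix.det_fin_three]; ring

lemma collinear_of_det3_eq_zero {p q r : ℝ × ℝ} (h : det3 p q r = 0) :
    Collinear ℝ ({p, q, r} : Set (ℝ × ℝ)) := by
  rcases eq_or_ne p q with rfl | hpq
  · simpa using collinear_pair ℝ p r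
  have hn : (q.1 - p.1) ^ 2 + (q.2 - p.2) ^ 2 ≠ 0 := fun h0 ↦
    hpq (Prod.ext (by nlinarith [sq_nonneg (q.1 - p.1), sq_nonneg (q.2 - p.2)])
      (by nlinarith [sq_nonneg (q.1 - p.1), sq_nonneg (q.2 - p.2)]))
  rw [det3_eq] at h
  rw [collinear_iff_of_mem (mem_insert p _)]
  refine ⟨q - p, ?_⟩
  simp only [mem_insert_iff, mem_singleton_iff, forall_eq_or_imp, forall_eq]
  -- `r - p` is parallel to `q - p`, so it is its own orthogonal projection onto `q - p`
  refine ⟨⟨0, by simp⟩, ⟨1, by simp⟩,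
    ⟨((r.1 - p.1) * (q.1 - p.1) + (r.2 - p.2) * (q.2 - p.2)) /
      ((q.1 - p.1) ^ 2 + (q.2 - p.2) ^ 2), ?_⟩⟩
  ext <;> simp only [vadd_eq_add, Prod.fst_add, Prod.snd_add, Prod.smul_fst, Prod.smul_snd,
    Prod.fst_sub, Prod.snd_sub, smul_eq_mul] <;> field_simp
  · linear_combination (-(q.2 - p.2)) * h
  · linear_combination (q.1 - p.1) * h

lemma InGenPos.det3_ne_zero {S : Set (ℝ × ℝ)} (hgp : InGenPos S) {p q r : ℝ × ℝ}
    (hp : p ∈ S) (hq : q ∈ S) (hr : r ∈ S) (hpq : p ≠ q) (hpr : p ≠ r) (hqr : q ≠ r) :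
    det3 p q r ≠ 0 :=
  fun h ↦ hgp p hp q hq r hr hpq hpr hqr (collinear_of_det3_eq_zero h)

/-- The line through the vertex `z` of a triangle and a point `p` of the triangle weakly
separates the other two vertices. -/
lemma det3_mul_det3_nonpos_of_mem_convexHull {x y z p : ℝ × ℝ}
    (h : p ∈ convexHull ℝ ({x, y, z} : Set (ℝ × ℝ))) :
    det3 p z x * det3 p z y ≤ 0 := by
  obtain ⟨a, b, c, ha, hb, -, habc, rfl⟩ := exists_of_mem_convexHull_triple h
  obtain rfl : c = 1 - a - b := by linarith
  have key : det3 (a • x + b • y + (1 - a - b) • z) z x *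
      det3 (a • x + b • y + (1 - a - b) • z) z y = -(a * b * det3 x y z ^ 2) := by
    simp only [det3_eq, Prod.fst_add, Prod.snd_add, Prod.smul_fst, Prod.smul_snd, smul_eq_mul]
    ring
  rw [key, neg_nonpos]
  positivity

lemma InGenPos.two_lt_ncard_extremePoints {S : Set (ℝ × ℝ)} (hgp : InGenPos S) (hS : S.Finite)
    (hcard : 2 < S.ncard) : 2 < ((convexHull ℝ S).extremePoints ℝ).ncard := by
  by_contra! hle
  obtain ⟨p, q, r, hp, hq, hr, hpq, hpr, hqr⟩ := (two_lt_ncard_iff hS).1 hcard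
  have hcol : Collinear ℝ S := collinear_of_subset_convexHull
    (collinear_of_ncard_le_two (hS.subset extremePoints_convexHull_subset) hle)
    hS.subset_convexHull_extremePoints
  exact hgp p hp q hq r hr hpq hpr hqr (hcol.subset (insert_subset hp (pair_subset hq hr)))

lemma InGenPos.exists_extremePoints_det3_ne_zero {S : Set (ℝ × ℝ)} (hgp : InGenPos S)
    (hS : S.Finite) (hcard : S.ncard = 5) :
    ∃ x₁ x₂ x₃ u e : ℝ × ℝ, S ⊆ {x₁, x₂, x₃, u, e} ∧ ∀ x ∈ ({x₁, x₂, x₃} : Set (ℝ × ℝ)),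
      x ∈ (convexHull ℝ S).extremePoints ℝ ∧ det3 e u x ≠ 0 := by
  obtain ⟨x₁, x₂, x₃, hx₁, hx₂, hx₃, h₁₂, h₁₃, h₂₃⟩ :=
    (two_lt_ncard_iff (hS.subset extremePoints_convexHull_subset)).1
      (hgp.two_lt_ncard_extremePoints hS (by omega))
  have hX : ({x₁, x₂, x₃} : Set (ℝ × ℝ)) ⊆ (convexHull ℝ S).extremePoints ℝ :=
    insert_subset hx₁ (pair_subset hx₂ hx₃)
  obtain ⟨u, e, hue, hrest⟩ := ncard_eq_two.1 (show (S \ {x₁, x₂, x₃}).ncard = 2 by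
    rw [ncard_sdiff (hX.trans extremePoints_convexHull_subset), hcard,
      ncard_eq_three.2 ⟨_, _, _, h₁₂, h₁₃, h₂₃, rfl⟩])
  have hu : u ∈ S \ {x₁, x₂, x₃} := hrest ▸ mem_insert u _
  have he : e ∈ S \ {x₁, x₂, x₃} := hrest ▸ mem_insert_of_mem u rfl
  refine ⟨x₁, x₂, x₃, u, e, fun q hq ↦ ?_, fun x hx ↦ ⟨hX hx, hgp.det3_ne_zero he.1 hu.1
    (extremePoints_convexHull_subset (hX hx)) hue.symm (ne_of_mem_of_not_mem hx he.2).symm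
    (ne_of_mem_of_not_mem hx hu.2).symm⟩⟩
  by_cases hqX : q ∈ ({x₁, x₂, x₃} : Set (ℝ × ℝ))
  · simp only [mem_insert_iff, mem_singleton_iff] at hqX ⊢
    tauto
  · have hq' : q ∈ ({u, e} : Set (ℝ × ℝ)) := hrest ▸ ⟨hq, hqX⟩
    simp only [mem_insert_iff, mem_singleton_iff] at hq' ⊢
    tauto

lemma isHole_sdiff_singleton {k : ℕ} {S : Set (ℝ × ℝ)} {z : ℝ × ℝ} (hS : S.Finite)
    (hcard : S.ncard = k + 1) (hz : z ∈ (convexHull ℝ S).extremePoints ℝ)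
    (hP : ∀ p ∈ (S \ {z}), p ∉ convexHull ℝ ((S \ {z}) \ {p})) : IsHole k S (S \ {z}) := by
  refine ⟨⟨sdiff_subset, hS.sdiff, ?_, fun p hp ↦
    mem_extremePoints_convexHull_of_notMem_convexHull_sdiff hS.sdiff hp (hP p hp)⟩, ?_⟩
  · rw [ncard_sdiff_singleton_of_mem (extremePoints_convexHull_subset hz), hcard,
      Nat.add_sub_cancel]
  · intro q hq hqP
    refine ⟨hq, fun hqz ↦ ?_⟩
    rw [mem_singleton_iff.1 hqz] at hqP
    exact notMem_convexHull_sdiff_of_mem_extremePoints hz hqP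

/-- `0 < det3 e u x * det3 e u y` says that `x` and `y` lie strictly on the same side of the
line `eu`. -/
lemma isHole_sdiff_of_det3_mul_pos {S : Set (ℝ × ℝ)} {x y z u e : ℝ × ℝ} (hS : S.Finite)
    (hcard : S.ncard = 5) (hSsub : S ⊆ {x, y, z, u, e})
    (hx : x ∈ (convexHull ℝ S).extremePoints ℝ) (hy : y ∈ (convexHull ℝ S).extremePoints ℝ)
    (hz : z ∈ (convexHull ℝ S).extremePoints ℝ) (hpos : 0 < det3 e u x * det3 e u y) :
    IsHole 4 S (S \ {z}) := by
  refine isHole_sdiff_singleton hS hcard hz fun p ⟨hpS, hpz⟩ hp ↦ ?_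
  have hsub : (S \ {z}) \ {p} ⊆ {x, y, u, e} \ {p} := by
    rintro q ⟨⟨hq, hqz⟩, hqp⟩
    refine ⟨?_, hqp⟩
    rcases hSsub hq with h | h | h | h | h <;> simp_all
  rcases hSsub hpS with rfl | rfl | rfl | rfl | rfl
  · exact notMem_convexHull_sdiff_of_mem_extremePoints hx
      (convexHull_mono (sdiff_subset_sdiff_left sdiff_subset) hp)
  · exact notMem_convexHull_sdiff_of_mem_extremePoints hy
      (convexHull_mono (sdiff_subset_sdiff_left sdiff_subset) hp)
  · exact hpz rfl
  · have hsub' : (S \ {z}) \ {p} ⊆ {x, y, e} := hsub.trans fun q ↦ by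
      simp only [mem_sdiff, mem_insert_iff, mem_singleton_iff]; tauto
    have := det3_mul_det3_nonpos_of_mem_convexHull (convexHull_mono hsub' hp)
    rw [det3_eq, det3_eq] at this hpos
    linarith
  · have hsub' : (S \ {z}) \ {p} ⊆ {x, y, u} := hsub.trans fun q ↦ by
      simp only [mem_sdiff, mem_insert_iff, mem_singleton_iff]; tauto
    have := det3_mul_det3_nonpos_of_mem_convexHull (convexHull_mono hsub' hp)
    linarith

/-- Every set of 5 points in the plane in general position contains a 4-hole. -/
theorem every_5_point_set_has_4hole (S : Set (ℝ × ℝ))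
    (hfin : S.Finite) (hcard : S.ncard = 5) (hgp : InGenPos S) :
    ∃ P : Set (ℝ × ℝ), IsHole 4 S P := by
  obtain ⟨x₁, x₂, x₃, u, e, hS, hX⟩ := hgp.exists_extremePoints_det3_ne_zero hfin hcard
  obtain ⟨hx₁, hd₁⟩ := hX x₁ (by simp)
  obtain ⟨hx₂, hd₂⟩ := hX x₂ (by simp)
  obtain ⟨hx₃, hd₃⟩ := hX x₃ (by simp)
  have hS₁₃₂ : S ⊆ {x₁, x₃, x₂, u, e} := by rwa [insert_comm x₃]
  have hS₂₃₁ : S ⊆ {x₂, x₃, x₁, u, e} := by rwa [insert_comm x₃, insert_comm x₂]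
  rcases mul_pos_or_mul_pos_or_mul_pos_of_ne_zero hd₁ hd₂ hd₃ with h | h | h
  · exact ⟨_, isHole_sdiff_of_det3_mul_pos hfin hcard hS hx₁ hx₂ hx₃ h⟩
  · exact ⟨_, isHole_sdiff_of_det3_mul_pos hfin hcard hS₁₃₂ hx₁ hx₃ hx₂ h⟩
  · exact ⟨_, isHole_sdiff_of_det3_mul_pos hfin hcard hS₂₃₁ hx₂ hx₃ hx₁ h⟩
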